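/- Every grounded family of curves F with ω(F) ≥ 2 has a subfamily G ⊆ F that is externally supported in F and satisfies χ(G) ≥ χ(F)/2 (that is, 2·χ(G) ≥ χ(F)). -/

import Mathlib

open Set

attribute [local instance] Classical.propDecidable

abbrev Pt : Type := ℝ × ℝ

/-- The closed upper halfplane. -/
def upperH : Set Pt := {p | 0 ≤ p.2}

/-- A curve: image of a continuous map from `[0,1]` to the plane. -/
def IsCurve (c : Set Pt) : Prop :=
  ∃ f : ℝ → Pt, ContinuousOn f (Set.Icc 0 1) ∧ f '' Set.Icc 0 1 = c

/-- A grounded curve: contained in the upper halfplane, meeting the baseline in exactly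
one point which is an endpoint of the curve. -/
def IsGroundedCurve (c : Set Pt) : Prop :=
  (∃ f : ℝ → Pt, ContinuousOn f (Set.Icc 0 1) ∧ f '' Set.Icc 0 1 = c ∧ (f 0).2 = 0) ∧
  c ⊆ upperH ∧ (∃! p : Pt, p ∈ c ∧ p.2 = 0)

/-- The (unique) point of a grounded curve on the baseline. -/
noncomputable def basepoint (c : Set Pt) : Pt :=
  if h : ∃ p : Pt, p ∈ c ∧ p.2 = 0 then h.choose else (0, 0)

/-- A grounded family of curves. -/
def IsGrounded (F : Set (Set Pt)) : Prop :=
  F.Finite ∧ (∀ c ∈ F, IsGroundedCurve c) ∧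
  ∀ c ∈ F, ∀ d ∈ F, c ≠ d → basepoint c ≠ basepoint d

/-- `prec u v` : the basepoint of `u` lies to the left of that of `v`. -/
def prec (u v : Set Pt) : Prop := (basepoint u).1 < (basepoint v).1

/-- `F(u,v)`: the curves of `F` between `u` and `v`. -/
def between (F : Set (Set Pt)) (u v : Set Pt) : Set (Set Pt) :=
  {c | c ∈ F ∧ prec u c ∧ prec c v}

/-- A proper coloring of the intersection graph of `F` with `m` colors. -/
def Colorable (F : Set (Set Pt)) (m : ℕ) : Prop :=
  ∃ φ : Set Pt → ℕ, (∀ c ∈ F, φ c < m) ∧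
    ∀ c ∈ F, ∀ d ∈ F, c ≠ d → (c ∩ d).Nonempty → φ c ≠ φ d

/-- Chromatic number of the intersection graph of `F`. -/
noncomputable def chi (F : Set (Set Pt)) : ℕ := sInf {m | Colorable F m}

/-- `ω(F) ≤ k`: every clique (set of pairwise intersecting members) has at most `k` members. -/
def cliqueLE (F : Set (Set Pt)) (k : ℕ) : Prop :=
  ∀ K : Finset (Set Pt), ↑K ⊆ F →
    (∀ c ∈ K, ∀ d ∈ K, c ≠ d → (c ∩ d).Nonempty) → K.card ≤ k

/-- Points of `upperH \ W` whose path-component in `upperH \ W` is unbounded. -/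
def extOf (W : Set Pt) : Set Pt :=
  {x | x ∈ upperH \ W ∧ ¬ Bornology.IsBounded (pathComponentIn (upperH \ W) x)}

/-- The exterior of a family of curves. -/
def extFam (F : Set (Set Pt)) : Set Pt := extOf (⋃₀ F)

/-- A chosen parametrization of a grounded curve by `[0,1]` starting at its basepoint. -/
noncomputable def param (c : Set Pt) : ℝ → Pt :=
  if h : ∃ f : ℝ → Pt, ContinuousOn f (Set.Icc 0 1) ∧ f '' Set.Icc 0 1 = c ∧ f 0 = basepoint c
  then h.choose else fun _ => (0, 0)

/-- `t₀ = inf {t : c(t) ∈ A}` for the chosen parametrization of `c`. -/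
noncomputable def firstTime (c A : Set Pt) : ℝ :=
  sInf {t | t ∈ Set.Icc (0:ℝ) 1 ∧ param c t ∈ A}

/-- The first point of `c` on `A`. -/
noncomputable def firstPoint (c A : Set Pt) : Pt := param c (firstTime c A)

/-- The portion of `c` from its basepoint up to and including its first point on `A`. -/
noncomputable def portionTo (c A : Set Pt) : Set Pt :=
  param c '' Set.Icc 0 (firstTime c A)

/-- The portion of `c` from its basepoint strictly before its first point on `A`. -/
noncomputable def portionBefore (c A : Set Pt) : Set Pt :=
  param c '' Set.Ico 0 (firstTime c A)

/-- The initial portion of `c` up to `A`; all of `c` if `c` is disjoint from `A`. -/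
noncomputable def initialPortion (c A : Set Pt) : Set Pt :=
  if (c ∩ A).Nonempty then portionTo c A else c

/-- A skeleton `(u,v,S)` in `F`. -/
def IsSkeleton (F : Set (Set Pt)) (u v : Set Pt) (S : Set (Set Pt)) : Prop :=
  u ∈ F ∧ v ∈ F ∧ prec u v ∧ (u ∩ v).Nonempty ∧ S ⊆ between F u v ∧
  ∀ s ∈ S, ∀ s' ∈ S, s ≠ s' → s ∩ s' = ∅

/-- `P` is supported by the skeleton `(u,v,S)`. -/
def SupportedBy (F : Set (Set Pt)) (u v : Set Pt) (S P : Set (Set Pt)) : Prop :=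
  P ⊆ between F u v ∧
  (∀ p ∈ P, p ∩ u = ∅ ∧ p ∩ v = ∅) ∧
  ∀ p ∈ P, ∃ s ∈ S, (p ∩ initialPortion s (u ∪ v)).Nonempty

/-- The data of a bracket: the families `P`, `S` and the selection `p ↦ s(p)`. -/
structure CBracket where
  P : Set (Set Pt)
  S : Set (Set Pt)
  sel : Set Pt → Set Pt

/-- `(P,S)` (with selection `sel`) is a bracket in `F`. -/
def IsCBracket (F : Set (Set Pt)) (B : CBracket) : Prop :=
  B.P ⊆ F ∧ B.S ⊆ F ∧
  ((∀ p ∈ B.P, ∀ s ∈ B.S, prec p s) ∨ (∀ p ∈ B.P, ∀ s ∈ B.S, prec s p)) ∧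
  (∀ p ∈ B.P, ∃ s ∈ B.S, (p ∩ s).Nonempty) ∧
  (∀ p ∈ B.P, B.sel p ∈ B.S ∧ firstPoint p (⋃₀ B.S) ∈ B.sel p) ∧
  ∀ s ∈ B.S, ∃ p ∈ B.P, firstPoint p (⋃₀ B.S) ∈ s

/-- `I(p)`: points of `upperH` not in any unbounded path-component of
`upperH \ (p' ∪ s(p) ∪ B(p))`. -/
noncomputable def CBracket.regionOf (B : CBracket) (p : Set Pt) : Set Pt :=
  upperH \ extOf (portionBefore p (⋃₀ B.S) ∪ B.sel p ∪
    segment ℝ (basepoint p) (basepoint (B.sel p)))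

/-- The interior `I` of a bracket. -/
noncomputable def CBracket.inter (B : CBracket) : Set Pt := ⋂ p ∈ B.P, B.regionOf p

/-- The exterior `E` of a bracket. -/
def CBracket.exter (B : CBracket) : Set Pt := extOf (⋃₀ (B.P ∪ B.S))

/-- An `n`-bracket system in `F`. -/
def IsCBracketSystem (F : Set (Set Pt)) {n : ℕ} (B : Fin n → CBracket) : Prop :=
  (∀ i, IsCBracket F (B i)) ∧
  (∀ i, ∀ p ∈ (B i).P, ∀ j, i < j → p ⊆ (B j).inter) ∧
  ∀ i, ∀ s ∈ (B i).S, (s ∩ ⋂ j ∈ {j | i < j}, (B j).exter).Nonempty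

/-- A clique in `F` (a finite set of pairwise intersecting curves of `F`). -/
def IsCliqueIn (F : Set (Set Pt)) (K : Finset (Set Pt)) : Prop :=
  ↑K ⊆ F ∧ ∀ c ∈ K, ∀ d ∈ K, c ≠ d → (c ∩ d).Nonempty

/-- `ℓ(K)`: the curve of `K` with leftmost basepoint. -/
noncomputable def lcur (K : Finset (Set Pt)) : Set Pt :=
  if h : ∃ c ∈ K, ∀ d ∈ K, d ≠ c → prec c d then h.choose else ∅

/-- `r(K)`: the curve of `K` with second leftmost basepoint. -/
noncomputable def rcur (K : Finset (Set Pt)) : Set Pt :=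
  if h : ∃ c ∈ K, c ≠ lcur K ∧ ∀ d ∈ K, d ≠ c → d ≠ lcur K → prec c d
  then h.choose else ∅

/-- `ℓ'(K)`: portion of `ℓ(K)` up to and including its first point on `r(K)`. -/
noncomputable def lport (K : Finset (Set Pt)) : Set Pt := portionTo (lcur K) (rcur K)

/-- `r'(K)`: portion of `r(K)` strictly before its first point on `ℓ'(K)`. -/
noncomputable def rport (K : Finset (Set Pt)) : Set Pt := portionBefore (rcur K) (lport K)

/-- `s` is left for `K`. -/
def leftFor (K : Finset (Set Pt)) (s : Set Pt) : Prop :=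
  (s ∩ lport K).Nonempty ∧ portionTo s (lport K) ∩ rport K = ∅

/-- `s` is right for `K`. -/
def rightFor (K : Finset (Set Pt)) (s : Set Pt) : Prop :=
  (s ∩ rport K).Nonempty ∧ portionTo s (rport K) ∩ lport K = ∅

/-- A `(k₁,…,kₙ)`-clique system in `F`. -/
def IsCliqueSystem (F : Set (Set Pt)) {n : ℕ} (ks : Fin n → ℕ)
    (K : Fin n → Finset (Set Pt)) : Prop :=
  (∀ i, IsCliqueIn F (K i) ∧ (K i).card = ks i) ∧
  ∀ i j : Fin n, i < j →
    ↑(K j) ⊆ between F (lcur (K i)) (rcur (K i)) ∧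
    (∀ s ∈ K j, (s ∩ (lport (K i) ∪ rport (K i))).Nonempty) ∧
    ((∀ s ∈ K j, leftFor (K i) s) ∨ (∀ s ∈ K j, rightFor (K i) s))

/-- `s` crosses the clique system `K`. -/
def Crosses (F : Set (Set Pt)) {n : ℕ} (K : Fin (n+1) → Finset (Set Pt)) (s : Set Pt) : Prop :=
  s ∈ between F (lcur (K (Fin.last n))) (rcur (K (Fin.last n))) ∧
  (s ∩ extOf (⋃ i, ⋃₀ (↑(K i) : Set (Set Pt)))).Nonempty

/-!
Let `c₀` be the curve with leftmost basepoint and split its component in the intersection graph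
into the layers `L i` of curves at distance `i` from `c₀`. Colouring the even layers from one
palette and the odd layers from another shows that, unless the rest of the family already has
chromatic number `χ(F)` (and we recurse on it), some layer `L i` with `i ≥ 1` satisfies
`χ(F) ≤ 2 χ(L i)`. Every `p ∈ L i` meets a curve `s` at distance `i - 1`, and `s` meets the
exterior of `L i`: the part of the baseline left of `c₀`, together with the curves before `s` on a
shortest chain from `c₀` to `s`, is a connected unbounded set avoiding `⋃ L i` and meeting `s`.
-/

def ExternallySupported (F G : Set (Set Pt)) : Prop :=
  ∀ p ∈ G, ∃ s ∈ F, (s ∩ p).Nonempty ∧ (s ∩ extFam G).Nonempty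

lemma ExternallySupported.mono {F F' G : Set (Set Pt)} (hFF' : F ⊆ F')
    (h : ExternallySupported F G) : ExternallySupported F' G := fun p hp ↦
  let ⟨s, hs, hsp, hsG⟩ := h p hp
  ⟨s, hFF' hs, hsp, hsG⟩

section Coloring

variable {F A B : Set (Set Pt)} {m : ℕ}

lemma Colorable.mono {m' : ℕ} (h : Colorable F m) (hm : m ≤ m') : Colorable F m' :=
  let ⟨φ, hφ, hproper⟩ := h
  ⟨φ, fun c hc ↦ (hφ c hc).trans_le hm, hproper⟩

lemma colorable_one_of_subsingleton (hF : F.Subsingleton) : Colorable F 1 :=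
  ⟨fun _ ↦ 0, fun _ _ ↦ Nat.one_pos, fun _ hc _ hd hne _ ↦ absurd (hF hc hd) hne⟩

lemma colorable_ncard (hF : F.Finite) : Colorable F F.ncard := by
  have hcard : F.encard ≤ ((Finset.range F.ncard : Finset ℕ) : Set ℕ).encard := by
    rw [encard_coe_eq_coe_finsetCard, Finset.card_range, hF.cast_ncard_eq]
  obtain ⟨φ, hφ, hinj⟩ := hF.exists_injOn_of_encard_le hcard
  exact ⟨φ, fun c hc ↦ by simpa using hφ hc, fun c hc d hd hne _ h ↦ hne (hinj hc hd h)⟩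

lemma chi_le (h : Colorable F m) : chi F ≤ m := Nat.sInf_le h

lemma colorable_chi (hF : F.Finite) : Colorable F (chi F) :=
  Nat.sInf_mem (s := {m | Colorable F m}) ⟨_, colorable_ncard hF⟩

lemma chi_empty : chi ∅ = 0 :=
  Nat.le_zero.1 (chi_le ⟨fun _ ↦ 0, fun _ h ↦ h.elim, fun _ h ↦ h.elim⟩)

lemma two_le_chi {u v : Set Pt} (hF : F.Finite) (hu : u ∈ F) (hv : v ∈ F) (huv : u ≠ v)
    (hinter : (u ∩ v).Nonempty) : 2 ≤ chi F := by
  obtain ⟨φ, hφ, hproper⟩ := colorable_chi hF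
  have := hφ u hu
  have := hφ v hv
  have := hproper u hu v hv huv hinter
  omega

lemma Colorable.union (hA : Colorable A m) (hB : Colorable B m)
    (hAB : ∀ a ∈ A, ∀ b ∈ B, a ∩ b = ∅) : Colorable (A ∪ B) m := by
  obtain ⟨φ, hφ, hφA⟩ := hA
  obtain ⟨ψ, hψ, hψB⟩ := hB
  refine ⟨fun c ↦ if c ∈ A then φ c else ψ c, ?_, ?_⟩
  · intro c hc
    dsimp only
    split_ifs with hcA
    exacts [hφ c hcA, hψ c (hc.resolve_left hcA)]
  · intro c hc d hd hne hcd
    dsimp only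
    split_ifs with hcA hdA hdA
    · exact hφA c hcA d hdA hne hcd
    · exact absurd (hAB c hcA d (hd.resolve_left hdA)) hcd.ne_empty
    · exact absurd (hAB d hdA c (hc.resolve_left hcA)) (inter_comm c d ▸ hcd.ne_empty)
    · exact hψB c (hc.resolve_left hcA) d (hd.resolve_left hdA) hne hcd

lemma colorable_add_of_levels (ℓ : Set Pt → ℕ) {a b : ℕ}
    (hℓ : ∀ c ∈ F, ∀ d ∈ F, (c ∩ d).Nonempty → ℓ d ≤ ℓ c + 1)
    (hlevel : ∀ i, Colorable {c ∈ F | ℓ c = i} (if Even i then a else b)) :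
    Colorable F (a + b) := by
  choose ψ hψ hproper using hlevel
  refine ⟨fun c ↦ if Even (ℓ c) then ψ (ℓ c) c else a + ψ (ℓ c) c, fun c hc ↦ ?_, ?_⟩
  · have := hψ (ℓ c) c ⟨hc, rfl⟩
    dsimp only
    split_ifs at this ⊢ <;> omega
  · intro c hc d hd hne hcd
    have hψc := hψ (ℓ c) c ⟨hc, rfl⟩
    have hψd := hψ (ℓ d) d ⟨hd, rfl⟩
    dsimp only
    obtain heq | hne' := eq_or_ne (ℓ c) (ℓ d)
    · have := hproper (ℓ c) c ⟨hc, rfl⟩ d ⟨hd, heq.symm⟩ hne hcd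
      rw [← heq]
      split_ifs <;> omega
    · have hdc := hℓ c hc d hd hcd
      have hcd' := hℓ d hd c hc (inter_comm c d ▸ hcd)
      have hparity : Even (ℓ c) ↔ ¬ Even (ℓ d) := by
        rcases (show ℓ d = ℓ c + 1 ∨ ℓ c = ℓ d + 1 by omega) with h | h <;>
          simp [h, Nat.even_add_one]
      split_ifs at hψc hψd ⊢ <;> first | omega | tauto

end Coloring

lemma mem_extOf_of_isPathConnected {W X : Set Pt} {x : Pt} (hX : IsPathConnected X)
    (hXW : X ⊆ upperH \ W) (hunb : ¬ Bornology.IsBounded X) (hx : x ∈ X) : x ∈ extOf W :=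
  ⟨hXW hx, fun hb ↦ hunb (hb.subset (hX.subset_pathComponentIn hx hXW))⟩

lemma IsPathConnected.subset_extOf {W X : Set Pt} (hX : IsPathConnected X)
    (hXW : X ⊆ upperH \ W) (hmeet : (X ∩ extOf W).Nonempty) : X ⊆ extOf W := by
  obtain ⟨x, hxX, -, hunb⟩ := hmeet
  intro y hy
  refine ⟨hXW hy, ?_⟩
  rwa [pathComponentIn_congr (hX.subset_pathComponentIn hxX hXW hy)]

namespace IsGroundedCurve

variable {c : Set Pt}

lemma basepoint_spec (hc : IsGroundedCurve c) : basepoint c ∈ c ∧ (basepoint c).2 = 0 := by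
  have hex : ∃ p : Pt, p ∈ c ∧ p.2 = 0 := hc.2.2.exists
  rw [basepoint, dif_pos hex]
  exact hex.choose_spec

lemma eq_basepoint (hc : IsGroundedCurve c) {q : Pt} (hq : q ∈ c) (hq₀ : q.2 = 0) :
    q = basepoint c :=
  hc.2.2.unique ⟨hq, hq₀⟩ hc.basepoint_spec

lemma isPathConnected (hc : IsGroundedCurve c) : IsPathConnected c := by
  obtain ⟨f, hf, rfl, -⟩ := hc.1
  exact ((convex_Icc 0 1).isPathConnected (nonempty_Icc.2 zero_le_one)).image' hf

end IsGroundedCurve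

lemma IsGrounded.mono {F G : Set (Set Pt)} (hF : IsGrounded F) (hGF : G ⊆ F) : IsGrounded G :=
  ⟨hF.1.subset hGF, fun c hc ↦ hF.2.1 c (hGF hc),
    fun c hc d hd ↦ hF.2.2 c (hGF hc) d (hGF hd)⟩

def leftRay (x₀ : ℝ) : Set Pt := Iic x₀ ×ˢ {0}

lemma isPathConnected_leftRay (x₀ : ℝ) : IsPathConnected (leftRay x₀) :=
  ((convex_Iic x₀).prod (convex_singleton 0)).isPathConnected
    ⟨(x₀, 0), mem_prod.2 ⟨mem_Iic.2 le_rfl, rfl⟩⟩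

lemma not_isBounded_leftRay (x₀ : ℝ) : ¬ Bornology.IsBounded (leftRay x₀) := fun hb ↦
  not_bddBelow_Iic x₀ (hb.fst_of_prod (singleton_nonempty 0)).bddBelow

lemma IsGrounded.leftRay_inter_eq_empty {F : Set (Set Pt)} (hF : IsGrounded F) {c₀ d : Set Pt}
    (hc₀ : c₀ ∈ F) (hmin : ∀ c ∈ F, (basepoint c₀).1 ≤ (basepoint c).1) (hd : d ∈ F)
    (hne : d ≠ c₀) : leftRay (basepoint c₀).1 ∩ d = ∅ := by
  refine eq_empty_of_forall_notMem fun q ⟨⟨hqx, hqy⟩, hqd⟩ ↦ hne ?_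
  have hq := (hF.2.1 d hd).eq_basepoint hqd hqy
  by_contra hdc₀
  refine hF.2.2 d hd c₀ hc₀ hdc₀ (Prod.ext (le_antisymm (hq ▸ hqx) (hmin d hd)) ?_)
  rw [(hF.2.1 d hd).basepoint_spec.2, (hF.2.1 c₀ hc₀).basepoint_spec.2]

lemma IsGrounded.basepoint_mem_extFam {F G : Set (Set Pt)} (hF : IsGrounded F) {c₀ : Set Pt}
    (hc₀ : c₀ ∈ F) (hmin : ∀ c ∈ F, (basepoint c₀).1 ≤ (basepoint c).1) (hGF : G ⊆ F)
    (hc₀G : c₀ ∉ G) : basepoint c₀ ∈ extFam G := by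
  refine mem_extOf_of_isPathConnected (isPathConnected_leftRay _) ?_ (not_isBounded_leftRay _)
    ⟨mem_Iic.2 le_rfl, (hF.2.1 c₀ hc₀).basepoint_spec.2⟩
  intro q hq
  refine ⟨(show (0 : ℝ) ≤ q.2 from hq.2.symm.le), fun ⟨d, hdG, hqd⟩ ↦ ?_⟩
  have hne : d ≠ c₀ := fun h ↦ hc₀G (h ▸ hdG)
  exact (hF.leftRay_inter_eq_empty hc₀ hmin (hGF hdG) hne).subset ⟨hq, hqd⟩

lemma SimpleGraph.Reachable.exists_adj_dist_eq {V : Type*} {G : SimpleGraph V} {u v : V} {n : ℕ}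
    (h : G.Reachable u v) (hd : G.dist u v = n + 1) :
    ∃ w, G.Adj w v ∧ G.Reachable u w ∧ G.dist u w = n := by
  obtain ⟨p, hp⟩ := h.exists_walk_length_eq_dist
  have hnil : ¬ p.Nil := by rw [← SimpleGraph.Walk.length_eq_zero_iff]; omega
  have hadj := p.adj_penultimate hnil
  have hle : G.dist u p.penultimate ≤ n :=
    (SimpleGraph.dist_le p.dropLast).trans (by rw [SimpleGraph.Walk.length_dropLast]; omega)
  refine ⟨p.penultimate, hadj, ⟨p.dropLast⟩, ?_⟩
  rcases hadj.diff_dist_adj (u := u) with h | h | h <;> omega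

/-- The intersection graph of `F`; sets outside `F` are isolated vertices. -/
def interGraph (F : Set (Set Pt)) : SimpleGraph (Set Pt) where
  Adj c d := c ∈ F ∧ d ∈ F ∧ c ≠ d ∧ (c ∩ d).Nonempty
  symm := ⟨fun _ _ h ↦ ⟨h.2.1, h.1, h.2.2.1.symm, inter_comm _ _ ▸ h.2.2.2⟩⟩
  loopless := ⟨fun _ h ↦ h.2.2.1 rfl⟩

lemma interGraph_adj {F : Set (Set Pt)} {c d : Set Pt} :
    (interGraph F).Adj c d ↔ c ∈ F ∧ d ∈ F ∧ c ≠ d ∧ (c ∩ d).Nonempty :=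
  Iff.rfl

section Layers

variable {F : Set (Set Pt)} {c₀ c d : Set Pt}

variable (F c₀) in
def component : Set (Set Pt) := {c ∈ F | (interGraph F).Reachable c₀ c}

variable (F c₀) in
def layer (i : ℕ) : Set (Set Pt) := {c ∈ component F c₀ | (interGraph F).dist c₀ c = i}

lemma component_subset : component F c₀ ⊆ F := sep_subset _ _

lemma layer_subset (i : ℕ) : layer F c₀ i ⊆ F := fun _ hc ↦ hc.1.1

lemma layer_zero_subsingleton : (layer F c₀ 0).Subsingleton := fun _ hc _ hd ↦
  (hc.1.2.dist_eq_zero_iff.1 hc.2).symm.trans (hd.1.2.dist_eq_zero_iff.1 hd.2)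

lemma mem_component_of_inter (hc : c ∈ component F c₀) (hd : d ∈ F) (hcd : (c ∩ d).Nonempty) :
    d ∈ component F c₀ := by
  obtain rfl | hne := eq_or_ne c d
  · exact hc
  · exact ⟨hd, hc.2.trans (interGraph_adj.2 ⟨hc.1, hd, hne, hcd⟩).reachable⟩

lemma dist_le_of_inter (hc : c ∈ component F c₀) (hd : d ∈ F) (hcd : (c ∩ d).Nonempty) :
    (interGraph F).dist c₀ d ≤ (interGraph F).dist c₀ c + 1 := by
  obtain rfl | hne := eq_or_ne c d
  · omega
  · have hadj : (interGraph F).Adj c d := interGraph_adj.2 ⟨hc.1, hd, hne, hcd⟩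
    rcases hadj.diff_dist_adj (u := c₀) with h | h | h <;> omega

lemma inter_eq_empty_of_lt_layer {i : ℕ} (hc : c ∈ component F c₀) (hd : d ∈ layer F c₀ i)
    (hci : (interGraph F).dist c₀ c + 1 < i) : c ∩ d = ∅ := by
  by_contra h
  have := dist_le_of_inter hc hd.1.1 (nonempty_iff_ne_empty.2 h)
  have := hd.2
  omega

lemma chi_le_max_component (hF : F.Finite) :
    chi F ≤ max (chi (component F c₀)) (chi (F \ component F c₀)) := by
  set R := component F c₀
  have hR : Colorable R (max (chi R) (chi (F \ R))) :=
    (colorable_chi (hF.subset component_subset)).mono (le_max_left _ _)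
  have hrest : Colorable (F \ R) (max (chi R) (chi (F \ R))) :=
    (colorable_chi (hF.subset sdiff_subset)).mono (le_max_right _ _)
  have hcol := hR.union hrest fun c hc d hd ↦ by
    by_contra h
    exact hd.2 (mem_component_of_inter hc hd.1 (nonempty_iff_ne_empty.2 h))
  rw [union_sdiff_cancel component_subset] at hcol
  exact chi_le hcol

lemma exists_layer_chi_ge (hF : F.Finite) {K : ℕ} (hK : 2 ≤ K)
    (hKR : K ≤ chi (component F c₀)) : ∃ i, 1 ≤ i ∧ K ≤ 2 * chi (layer F c₀ i) := by
  by_contra! hsmall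
  have hlevel : ∀ i, Colorable (layer F c₀ i)
      (if Even i then max 1 ((K - 1) / 2) else (K - 1) / 2) := by
    intro i
    rcases Nat.eq_zero_or_pos i with rfl | hi
    · exact (colorable_one_of_subsingleton layer_zero_subsingleton).mono (by simp)
    · have := hsmall i hi
      exact (colorable_chi (hF.subset (layer_subset i))).mono (by split_ifs <;> omega)
  have := chi_le (colorable_add_of_levels (fun c ↦ (interGraph F).dist c₀ c)
    (fun c hc d hd hcd ↦ dist_le_of_inter hc hd.1 hcd) hlevel)
  omega

lemma subset_upperH_diff_sUnion_layer (hF : IsGrounded F) {i : ℕ} (hc : c ∈ component F c₀)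
    (hci : (interGraph F).dist c₀ c + 1 < i) : c ⊆ upperH \ ⋃₀ layer F c₀ i :=
  fun _ hz ↦ ⟨(hF.2.1 c hc.1).2.1 hz, fun ⟨_, hd, hzd⟩ ↦
    (inter_eq_empty_of_lt_layer hc hd hci).subset ⟨hz, hzd⟩⟩

lemma IsGrounded.externallySupported_layer (hF : IsGrounded F) (hc₀ : c₀ ∈ F)
    (hmin : ∀ c ∈ F, (basepoint c₀).1 ≤ (basepoint c).1) {i : ℕ} (hi : 1 ≤ i) :
    ExternallySupported F (layer F c₀ i) := by
  have hbase : basepoint c₀ ∈ extFam (layer F c₀ i) :=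
    hF.basepoint_mem_extFam hc₀ hmin (layer_subset i) fun h ↦ by
      have := h.2
      simp only [SimpleGraph.dist_self] at this
      omega
  have hmeet_ext : ∀ n, ∀ s ∈ layer F c₀ n, n < i → (s ∩ extFam (layer F c₀ i)).Nonempty := by
    intro n
    induction n with
    | zero =>
      intro s hs _
      obtain rfl := (hs.1.2.dist_eq_zero_iff.1 hs.2).symm
      exact ⟨_, (hF.2.1 _ hc₀).basepoint_spec.1, hbase⟩
    | succ n ih =>
      intro s hs hni
      obtain ⟨s', hadj, hs'reach, hs'dist⟩ := hs.1.2.exists_adj_dist_eq hs.2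
      rw [interGraph_adj] at hadj
      have hs' : s' ∈ component F c₀ := ⟨hadj.1, hs'reach⟩
      have hs'ext := (hF.2.1 s' hadj.1).isPathConnected.subset_extOf
        (subset_upperH_diff_sUnion_layer hF hs' (by omega)) (ih s' ⟨hs', hs'dist⟩ (by omega))
      obtain ⟨z, hzs', hzs⟩ := hadj.2.2.2
      exact ⟨z, hzs, hs'ext hzs'⟩
  intro p hp
  obtain ⟨n, rfl⟩ : ∃ n, i = n + 1 := ⟨i - 1, by omega⟩
  obtain ⟨s, hadj, hsreach, hsdist⟩ := hp.1.2.exists_adj_dist_eq hp.2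
  rw [interGraph_adj] at hadj
  exact ⟨s, hadj.1, hadj.2.2.2, hmeet_ext n s ⟨⟨hadj.1, hsreach⟩, hsdist⟩ n.lt_succ_self⟩

end Layers

theorem IsGrounded.exists_externallySupported {F : Set (Set Pt)} (hF : IsGrounded F)
    (hchi : 2 ≤ chi F) : ∃ G ⊆ F, ExternallySupported F G ∧ chi F ≤ 2 * chi G := by
  induction hn : F.ncard using Nat.strong_induction_on generalizing F with
  | _ n ih =>
  have hFne : F.Nonempty := nonempty_iff_ne_empty.2 fun h ↦ by simp [h, chi_empty] at hchi
  obtain ⟨c₀, hc₀, hmin⟩ := exists_min_image F (fun c ↦ (basepoint c).1) hF.1 hFne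
  by_cases hrest : chi F ≤ chi (F \ component F c₀)
  · have hlt : (F \ component F c₀).ncard < n := hn ▸ ncard_lt_ncard
      ((ssubset_iff_of_subset sdiff_subset).2 ⟨c₀, hc₀, fun h ↦ h.2 ⟨hc₀, .refl c₀⟩⟩) hF.1
    obtain ⟨G, hG, hsupp, hchiG⟩ := ih _ hlt (hF.mono sdiff_subset) (hchi.trans hrest) rfl
    exact ⟨G, hG.trans sdiff_subset, hsupp.mono sdiff_subset, hrest.trans hchiG⟩
  · have hR : chi F ≤ chi (component F c₀) := by
      have := chi_le_max_component (c₀ := c₀) hF.1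
      omega
    obtain ⟨i, hi, hchi_i⟩ := exists_layer_chi_ge hF.1 hchi hR
    exact ⟨layer F c₀ i, layer_subset i, hF.externallySupported_layer hc₀ hmin hi, hchi_i⟩

/-- Externally supported subfamily with at least half the chromatic number. -/
theorem externally_supported_subfamily (F : Set (Set Pt)) (hF : IsGrounded F)
    (homega : ∃ u ∈ F, ∃ v ∈ F, u ≠ v ∧ (u ∩ v).Nonempty) :
    ∃ G ⊆ F, (∀ p ∈ G, ∃ s ∈ F, (s ∩ p).Nonempty ∧ (s ∩ extFam G).Nonempty) ∧
      chi F ≤ 2 * chi G := by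
  obtain ⟨u, hu, v, hv, huv, hinter⟩ := homega
  exact hF.exists_externallySupported (two_le_chi hF.1 hu hv huv hinter)
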